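/- arXiv:2311.07610 — 2 statements merged into one kernel-verified Lean document; each statement's English description precedes it below -/
import Mathlib

section
/- For every positive integer n, ∑_{k=0}^{⌊n/2⌋} (-1)^{n-k}·(n/(n-k))·C(n-k, k)·L_{n-2k} equals 4 if n ≡ 0 (mod 5), and equals -1 otherwise. -/
/-!
The weights `(-1)^k n/(n-k) C(n-k,k)` are the coefficients of the Dickson polynomial
`D_n(x) = Σ (-1)^k n/(n-k) C(n-k,k) x^(n-2k)`, which satisfies `D_n(u + u⁻¹) = u^n + u^(-n)`.
For a primitive fifth root of unity `ω`, the golden ratio and its conjugate are `-(ω² + ω³)` and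
`-(ω + ω⁴)`, so `L_m = (-1)^m ((ω² + ω⁻²)^m + (ω + ω⁻¹)^m)`. The signs `(-1)^(n-k)` absorb the
`(-1)^m`, and the sum becomes `ω^(2n) + ω^(-2n) + ω^n + ω^(-n) = Σ_{j<5} ω^(jn) - 1`, which is
`4` if `5 ∣ n` and `-1` otherwise.
-/

open Finset Real

/-- Fibonacci numbers extended to integer indices. -/
def fibZ (n : ℤ) : ℤ :=
  if 0 ≤ n then (Nat.fib n.toNat : ℤ)
  else (-1) ^ ((-n).toNat + 1) * (Nat.fib (-n).toNat : ℤ)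

/-- Lucas numbers on natural indices. -/
def lucasNat : ℕ → ℤ
  | 0 => 2
  | 1 => 1
  | n + 2 => lucasNat (n + 1) + lucasNat n

/-- Lucas numbers extended to integer indices. -/
def lucasZ (n : ℤ) : ℤ :=
  if 0 ≤ n then lucasNat n.toNat
  else (-1) ^ (-n).toNat * lucasNat (-n).toNat

noncomputable def gold : ℝ := (1 + Real.sqrt 5) / 2
noncomputable def gold' : ℝ := (1 - Real.sqrt 5) / 2

open Polynomial

/-- The integer `n / (n - k) * C(n - k, k)`, written as `C(n - k, k) + C(n - k - 1, k - 1)`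
for `k ≥ 1`. -/
def dicksonCoeff (n : ℕ) : ℕ → ℕ
  | 0 => 1
  | k + 1 => (n - (k + 1)).choose (k + 1) + (n - (k + 2)).choose k

theorem dicksonCoeff_add_two_succ {n k : ℕ} (hk : 2 * k ≤ n) :
    dicksonCoeff (n + 2) (k + 1) = dicksonCoeff (n + 1) (k + 1) + dicksonCoeff n k := by
  rcases k with _ | j
  · simp [dicksonCoeff]
  · obtain ⟨m, rfl⟩ : ∃ m, n = m + 2 * (j + 1) := ⟨n - 2 * (j + 1), by omega⟩
    simp only [dicksonCoeff]
    rw [show m + 2 * (j + 1) + 2 - (j + 1 + 1) = m + j + 2 by omega,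
      show m + 2 * (j + 1) + 2 - (j + 1 + 2) = m + j + 1 by omega,
      show m + 2 * (j + 1) + 1 - (j + 1 + 1) = m + j + 1 by omega,
      show m + 2 * (j + 1) + 1 - (j + 1 + 2) = m + j by omega,
      show m + 2 * (j + 1) - (j + 1) = m + j + 1 by omega,
      show m + 2 * (j + 1) - (j + 2) = m + j by omega,
      Nat.choose_succ_succ (m + j + 1) (j + 1), Nat.choose_succ_succ (m + j) j]
    ring

theorem dicksonCoeff_eq_zero {n k : ℕ} (hk : n < 2 * (k + 2)) : dicksonCoeff n (k + 2) = 0 := by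
  simp only [dicksonCoeff, Nat.add_eq_zero_iff]
  constructor <;> exact Nat.choose_eq_zero_of_lt (by omega)

theorem dicksonCoeff_eq_div_mul_choose {K : Type*} [Field K] [CharZero K] {n k : ℕ}
    (hk : k < n) :
    (n : K) / (n - k) * (n - k).choose k = dicksonCoeff n k := by
  have hnk : (n : K) - k ≠ 0 := by
    rw [sub_ne_zero]; exact_mod_cast hk.ne'
  rw [div_mul_eq_mul_div, div_eq_iff hnk]
  rcases k with _ | j
  · simp [dicksonCoeff]
  · obtain ⟨m, rfl⟩ : ∃ m, n = m + j + 2 := ⟨n - (j + 2), by omega⟩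
    have hpascal : ((m : K) + 1) * m.choose j = (m + 1).choose (j + 1) * (j + 1) := by
      exact_mod_cast Nat.add_one_mul_choose_eq m j
    simp only [dicksonCoeff, show m + j + 2 - (j + 1) = m + 1 by omega,
      show m + j + 2 - (j + 2) = m by omega]
    push_cast
    linear_combination -hpascal

section Dickson

variable {R : Type*} [CommRing R]

theorem sum_dicksonCoeff_add_two (a : R) {n : ℕ} (hn : 0 < n) :
    ∑ k ∈ range ((n + 2) / 2 + 1),
        (-C a) ^ k * (dicksonCoeff (n + 2) k : R[X]) * X ^ (n + 2 - 2 * k) =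
      X * ∑ k ∈ range ((n + 1) / 2 + 1),
          (-C a) ^ k * (dicksonCoeff (n + 1) k : R[X]) * X ^ (n + 1 - 2 * k) -
        C a * ∑ k ∈ range (n / 2 + 1), (-C a) ^ k * (dicksonCoeff n k : R[X]) * X ^ (n - 2 * k) := by
  have hrange : (n + 2) / 2 + 1 = n / 2 + 1 + 1 := by omega
  have hextend : ∑ k ∈ range ((n + 1) / 2 + 1),
        (-C a) ^ k * (dicksonCoeff (n + 1) k : R[X]) * X ^ (n + 1 - 2 * k) =
      ∑ k ∈ range (n / 2 + 1 + 1),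
        (-C a) ^ k * (dicksonCoeff (n + 1) k : R[X]) * X ^ (n + 1 - 2 * k) := by
    refine sum_subset (range_subset_range.2 (by omega)) fun k hk hk' => ?_
    simp only [mem_range] at hk hk'
    obtain ⟨j, rfl⟩ : ∃ j, k = j + 2 := ⟨k - 2, by omega⟩
    rw [dicksonCoeff_eq_zero (by omega), Nat.cast_zero, mul_zero, zero_mul]
  have hterm : ∀ k ∈ range (n / 2 + 1),
      (-C a) ^ (k + 1) * (dicksonCoeff (n + 2) (k + 1) : R[X]) * X ^ (n + 2 - 2 * (k + 1)) =
        X * ((-C a) ^ (k + 1) * (dicksonCoeff (n + 1) (k + 1) : R[X]) *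
            X ^ (n + 1 - 2 * (k + 1))) -
          C a * ((-C a) ^ k * (dicksonCoeff n k : R[X]) * X ^ (n - 2 * k)) := by
    intro k hk
    rw [mem_range] at hk
    rw [dicksonCoeff_add_two_succ (by omega), show n + 2 - 2 * (k + 1) = n - 2 * k by omega]
    rcases Nat.lt_or_ge (2 * k) n with hlt | hge
    · rw [show n - 2 * k = n + 1 - 2 * (k + 1) + 1 by omega]
      push_cast
      ring
    · obtain ⟨j, rfl⟩ : ∃ j, k = j + 1 := ⟨k - 1, by omega⟩
      rw [dicksonCoeff_eq_zero (by omega)]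
      push_cast
      ring
  rw [hrange, hextend, sum_range_succ' _ (n / 2 + 1), sum_range_succ' _ (n / 2 + 1),
    sum_congr rfl hterm, sum_sub_distrib, mul_add, mul_sum, mul_sum]
  simp only [dicksonCoeff, pow_zero, Nat.cast_one, mul_one, one_mul, Nat.sub_zero, mul_zero]
  ring

theorem dickson_one_eq_sum (a : R) :
    ∀ n, 0 < n → dickson 1 a n =
      ∑ k ∈ range (n / 2 + 1), (-C a) ^ k * (dicksonCoeff n k : R[X]) * X ^ (n - 2 * k)
  | 1, _ => by simp [dicksonCoeff]
  | 2, _ => by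
    simp [sum_range_succ, dicksonCoeff]
    ring
  | n + 3, _ => by
    rw [dickson_add_two, dickson_one_eq_sum a (n + 2) (by omega),
      dickson_one_eq_sum a (n + 1) (by omega)]
    exact (sum_dicksonCoeff_add_two a (n := n + 1) (by omega)).symm

theorem sum_dicksonCoeff_mul_add_pow {x y : R} (hxy : x * y = 1) {n : ℕ} (hn : 0 < n) :
    ∑ k ∈ range (n / 2 + 1), (-1) ^ k * (dicksonCoeff n k : R) * (x + y) ^ (n - 2 * k) =
      x ^ n + y ^ n := by
  rw [← dickson_one_one_eval_add_inv x y hxy, dickson_one_eq_sum 1 n hn, eval_finsetSum]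
  simp

end Dickson

theorem lucasNat_eq_pow_add_pow {R : Type*} [CommRing R] {s t : R} (hsum : s + t = 1)
    (hprod : s * t = -1) : ∀ m, (lucasNat m : R) = s ^ m + t ^ m
  | 0 => by norm_num [lucasNat]
  | 1 => by simp [lucasNat, hsum]
  | m + 2 => by
    rw [lucasNat, Int.cast_add, lucasNat_eq_pow_add_pow hsum hprod (m + 1),
      lucasNat_eq_pow_add_pow hsum hprod m]
    linear_combination (s ^ m + t ^ m) * hprod - (s ^ (m + 1) + t ^ (m + 1)) * hsum

theorem lucasZ_natCast (m : ℕ) : lucasZ m = lucasNat m := by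
  simp [lucasZ]

theorem IsPrimitiveRoot.geom_sum_pow_eq_ite {R : Type*} [CommRing R] [IsDomain R] {ζ : R}
    {k : ℕ} (hζ : IsPrimitiveRoot ζ k) (n : ℕ) :
    ∑ j ∈ range k, (ζ ^ n) ^ j = if k ∣ n then (k : R) else 0 := by
  split_ifs with hdvd
  · simp [(hζ.pow_eq_one_iff_dvd n).2 hdvd]
  · have hne : ζ ^ n - 1 ≠ 0 := sub_ne_zero.2 (mt (hζ.pow_eq_one_iff_dvd n).1 hdvd)
    refine (mul_eq_zero.1 ?_).resolve_right hne
    rw [geom_sum_mul, ← pow_mul, mul_comm, pow_mul, hζ.pow_eq_one, one_pow, sub_self]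

theorem sum_neg_one_pow_mul_dicksonCoeff_mul_lucasNat {n : ℕ} (hn : 0 < n) :
    ∑ k ∈ range (n / 2 + 1), (-1 : ℤ) ^ (n - k) * dicksonCoeff n k * lucasNat (n - 2 * k) =
      if 5 ∣ n then 4 else -1 := by
  apply Int.cast_injective (α := ℂ)
  have hω := Complex.isPrimitiveRoot_exp 5 (by norm_num)
  set ω := Complex.exp (2 * π * Complex.I / (5 : ℕ))
  have hω5 : ω ^ 5 = 1 := hω.pow_eq_one
  have hgeom : 1 + ω + ω ^ 2 + ω ^ 3 + ω ^ 4 = 0 := by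
    simpa [sum_range_succ] using hω.geom_sum_eq_zero (by norm_num)
  -- `-(ω² + ω³)` and `-(ω + ω⁴)` are the golden ratio and its conjugate, and `ω² + ω³`,
  -- `ω + ω⁴` have the form `x + x⁻¹`, to which the Dickson expansion applies.
  have hlucas := lucasNat_eq_pow_add_pow (s := -(ω ^ 2 + ω ^ 3)) (t := -(ω + ω ^ 4))
    (by linear_combination -hgeom) (by linear_combination (ω + ω ^ 2) * hω5 + hgeom)
  have hterm : ∀ k ∈ range (n / 2 + 1),
      (-1 : ℂ) ^ (n - k) * dicksonCoeff n k * lucasNat (n - 2 * k) =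
        (-1) ^ k * dicksonCoeff n k * (ω ^ 2 + ω ^ 3) ^ (n - 2 * k) +
          (-1) ^ k * dicksonCoeff n k * (ω + ω ^ 4) ^ (n - 2 * k) := by
    intro k hk
    rw [mem_range] at hk
    have hsign : (-1 : ℂ) ^ (n - k) * (-1) ^ (n - 2 * k) = (-1) ^ k := by
      rw [← pow_add, show n - k + (n - 2 * k) = k + 2 * (n - 2 * k) by omega, pow_add, pow_mul]
      simp
    rw [hlucas, neg_pow (ω ^ 2 + ω ^ 3), neg_pow (ω + ω ^ 4)]
    linear_combination
      (dicksonCoeff n k : ℂ) * ((ω ^ 2 + ω ^ 3) ^ (n - 2 * k) + (ω + ω ^ 4) ^ (n - 2 * k)) * hsign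
  push_cast
  rw [sum_congr rfl hterm, sum_add_distrib,
    sum_dicksonCoeff_mul_add_pow (x := ω ^ 2) (y := ω ^ 3) (by linear_combination hω5) hn,
    sum_dicksonCoeff_mul_add_pow (x := ω) (y := ω ^ 4) (by linear_combination hω5) hn]
  have hroots := hω.geom_sum_pow_eq_ite n
  simp only [sum_range_succ, sum_range_zero] at hroots
  split_ifs at hroots ⊢ <;> push_cast at hroots ⊢ <;> linear_combination hroots

theorem stmt11 (n : ℕ) (hn : 0 < n) :
    ∑ k ∈ Finset.range (n / 2 + 1),
        (-1 : ℝ) ^ (n - k) * ((n : ℝ) / ((n : ℝ) - (k : ℝ))) * (Nat.choose (n - k) k : ℝ) *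
          (lucasZ ((n : ℤ) - 2 * k) : ℝ) =
      if n % 5 = 0 then 4 else -1 := by
  have hterm : ∀ k ∈ range (n / 2 + 1),
      (-1 : ℝ) ^ (n - k) * ((n : ℝ) / ((n : ℝ) - (k : ℝ))) * (Nat.choose (n - k) k : ℝ) *
          (lucasZ ((n : ℤ) - 2 * k) : ℝ) =
        (((-1 : ℤ) ^ (n - k) * dicksonCoeff n k * lucasNat (n - 2 * k) : ℤ) : ℝ) := by
    intro k hk
    rw [mem_range] at hk
    rw [mul_assoc _ ((n : ℝ) / _), dicksonCoeff_eq_div_mul_choose (by omega),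
      show (n : ℤ) - 2 * k = ((n - 2 * k : ℕ) : ℤ) by omega, lucasZ_natCast]
    push_cast
    ring
  rw [sum_congr rfl hterm, ← Int.cast_sum, sum_neg_one_pow_mul_dicksonCoeff_mul_lucasNat hn]
  simp [Nat.dvd_iff_mod_eq_zero]
end

section
/- For every non-negative integer n and integer t, ∑_{k=0}^{n} (-1)^{n-k}·C(n+k, n-k)·F_{2k+t} equals F_t if n ≡ 0 (mod 5); equals F_{t+1} if n ≡ 1 (mod 5); equals 0 if n ≡ 2 (mod 5); equals -F_{t+1} if n ≡ 3 (mod 5); and equals -F_t if n ≡ 4 (mod 5). -/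
/-!
Put `c(n, k) = (-1) ^ (n + k) * C(n + k, 2k)` and `S_n(t) = ∑ₖ c(n, k) f(2k + t)`. Pascal's rule
gives `c(n+2, k+1) = c(n+1, k) - 2 c(n+1, k+1) - c(n, k+1)`, hence
`S_{n+2}(t) = S_{n+1}(t + 2) - 2 S_{n+1}(t) - S_n(t)`. If `f` satisfies the Fibonacci recurrence
then `f(s + 2) - 2 f(s) = f(s - 1)`, so `S_{n+2}(t) = S_{n+1}(t - 1) - S_n(t)`. The five-periodic
right-hand side obeys the same recurrence and `S_0(t) = f(t)`, `S_1(t) = f(t + 1)`.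
-/

open Finset Real

lemma fibZ_natCast (m : ℕ) : fibZ m = Nat.fib m := by
  simp [fibZ]

lemma fibZ_neg_natCast (m : ℕ) : fibZ (-m) = (-1) ^ (m + 1) * Nat.fib m := by
  obtain rfl | - := m.eq_zero_or_pos <;> simp [fibZ]

lemma fibZ_add_two (t : ℤ) : fibZ (t + 2) = fibZ (t + 1) + fibZ t := by
  obtain ⟨m, rfl | rfl⟩ := Int.eq_nat_or_neg t
  · have h2 : (m : ℤ) + 2 = (m + 2 : ℕ) := by push_cast; ring
    have h1 : (m : ℤ) + 1 = (m + 1 : ℕ) := by push_cast; ring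
    rw [h2, h1, fibZ_natCast, fibZ_natCast, fibZ_natCast, Nat.fib_add_two]
    push_cast
    ring
  rcases m with _ | _ | m
  · decide
  · decide
  · have h1 : -((m + 2 : ℕ) : ℤ) + 2 = -m := by push_cast; ring
    have h2 : -((m + 2 : ℕ) : ℤ) + 1 = -(m + 1 : ℕ) := by push_cast; ring
    rw [h1, h2, fibZ_neg_natCast, fibZ_neg_natCast, fibZ_neg_natCast, Nat.fib_add_two]
    push_cast [pow_succ]
    ring

lemma choose_add_two_add_two_add_choose (m a : ℕ) :
    (m + 2).choose (a + 2) + m.choose (a + 2) = m.choose a + 2 * (m + 1).choose (a + 2) := by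
  simp only [Nat.choose_succ_succ, Nat.succ_eq_add_one]
  ring

section SignedChooseSum

variable {R : Type*} [CommRing R]

variable (R) in
/-- For `k ≤ n` this is the coefficient `(-1) ^ (n - k) * C(n + k, n - k)`; unlike that form
it vanishes for `k > n`, so sums over any long enough range agree, and it involves no truncated
subtraction. -/
def signedChoose (n k : ℕ) : R := (-1) ^ (n + k) * ((n + k).choose (2 * k) : R)

lemma signedChoose_add_two_zero (n : ℕ) :
    signedChoose R (n + 2) 0 = -2 * signedChoose R (n + 1) 0 - signedChoose R n 0 := by
  simp only [signedChoose, add_zero, mul_zero, Nat.choose_zero_right, pow_succ]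
  ring

lemma signedChoose_add_two_add_one (n k : ℕ) :
    signedChoose R (n + 2) (k + 1) =
      signedChoose R (n + 1) k - 2 * signedChoose R (n + 1) (k + 1) - signedChoose R n (k + 1) := by
  have h := congrArg (Nat.cast : ℕ → R) (choose_add_two_add_two_add_choose (n + k + 1) (2 * k))
  push_cast at h
  simp only [signedChoose, show n + 2 + (k + 1) = n + k + 1 + 2 by ring,
    show n + 1 + (k + 1) = n + k + 1 + 1 by ring, show n + (k + 1) = n + k + 1 by ring,
    show n + 1 + k = n + k + 1 by ring, show 2 * (k + 1) = 2 * k + 2 by ring, pow_succ]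
  linear_combination -(-1 : R) ^ (n + k) * h

def signedChooseSum (f : ℤ → R) (n : ℕ) (t : ℤ) : R :=
  ∑ k ∈ range (n + 1), signedChoose R n k * f (2 * k + t)

lemma signedChooseSum_eq_sum_range (f : ℤ → R) {n N : ℕ} (h : n < N) (t : ℤ) :
    signedChooseSum f n t = ∑ k ∈ range N, signedChoose R n k * f (2 * k + t) := by
  refine sum_subset (range_subset_range.2 h) fun k _ hk => ?_
  rw [mem_range, not_lt] at hk
  rw [signedChoose, Nat.choose_eq_zero_of_lt (by omega), Nat.cast_zero, mul_zero, zero_mul]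

lemma signedChooseSum_add_two (f : ℤ → R) (n : ℕ) (t : ℤ) :
    signedChooseSum f (n + 2) t = signedChooseSum f (n + 1) (t + 2) -
      2 * signedChooseSum f (n + 1) t - signedChooseSum f n t := by
  have shift : signedChooseSum f (n + 1) (t + 2) =
      ∑ k ∈ range (n + 2), signedChoose R (n + 1) k * f (2 * (k + 1 : ℕ) + t) :=
    sum_congr rfl fun k _ => by push_cast; ring_nf
  rw [shift, signedChooseSum_eq_sum_range f (by omega : n + 1 < n + 3) t,
    signedChooseSum_eq_sum_range f (by omega : n < n + 3) t, signedChooseSum,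
    sum_range_succ' _ (n + 2), sum_range_succ' _ (n + 2), sum_range_succ' _ (n + 2)]
  simp only [signedChoose_add_two_add_one, signedChoose_add_two_zero, sub_mul, sum_sub_distrib,
    mul_assoc, ← mul_sum]
  ring

lemma signedChooseSum_zero (f : ℤ → R) (t : ℤ) : signedChooseSum f 0 t = f t := by
  simp [signedChooseSum, signedChoose]

def fiveCycle (f : ℤ → R) (n : ℕ) (t : ℤ) : R :=
  if n % 5 = 0 then f t
  else if n % 5 = 1 then f (t + 1)
  else if n % 5 = 2 then 0
  else if n % 5 = 3 then -f (t + 1)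
  else -f t

variable {f : ℤ → R} (hf : ∀ t, f (t + 2) = f (t + 1) + f t)
include hf

lemma signedChooseSum_one (t : ℤ) : signedChooseSum f 1 t = f (t + 1) := by
  simp [signedChooseSum, signedChoose, sum_range_succ, add_comm 2 t, hf]

lemma signedChooseSum_add_two_of_fib (n : ℕ) (t : ℤ) :
    signedChooseSum f (n + 2) t = signedChooseSum f (n + 1) (t - 1) - signedChooseSum f n t := by
  rw [signedChooseSum_add_two, signedChooseSum, signedChooseSum, signedChooseSum, mul_sum,
    ← sum_sub_distrib]
  congr 1
  refine sum_congr rfl fun k _ => ?_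
  have h₁ := hf (2 * k + t)
  have h₂ := hf (2 * k + (t - 1))
  rw [show 2 * (k : ℤ) + (t - 1) + 2 = 2 * k + t + 1 by ring,
    show 2 * (k : ℤ) + (t - 1) + 1 = 2 * k + t by ring] at h₂
  rw [show 2 * (k : ℤ) + (t + 2) = 2 * k + t + 2 by ring]
  linear_combination signedChoose R (n + 1) k * (h₁ + h₂)

lemma fiveCycle_add_two (n : ℕ) (t : ℤ) :
    fiveCycle f (n + 2) t = fiveCycle f (n + 1) (t - 1) - fiveCycle f n t := by
  have h := hf (t - 1)
  rw [sub_add_cancel, show t - 1 + 2 = t + 1 by ring] at h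
  have : n % 5 < 5 := Nat.mod_lt _ (by norm_num)
  interval_cases hn : n % 5 <;> simp [fiveCycle, Nat.add_mod n, hn, h, add_comm]

lemma signedChooseSum_eq_fiveCycle (n : ℕ) : ∀ t, signedChooseSum f n t = fiveCycle f n t := by
  induction n using Nat.twoStepInduction with
  | zero => exact fun t => signedChooseSum_zero f t
  | one => exact fun t => signedChooseSum_one hf t
  | more n ih₀ ih₁ =>
    intro t
    rw [signedChooseSum_add_two_of_fib hf, fiveCycle_add_two hf, ih₀, ih₁]

end SignedChooseSum

lemma neg_one_pow_sub_mul_choose_eq_signedChoose {n k : ℕ} (hk : k ≤ n) :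
    (-1 : ℤ) ^ (n - k) * (n + k).choose (n - k) = signedChoose ℤ n k := by
  rw [signedChoose, ← Nat.choose_symm_of_eq_add (by omega : n + k = (n - k) + 2 * k),
    show n + k = (n - k) + 2 * k by omega, pow_add, pow_mul, neg_one_sq, one_pow, mul_one]

theorem stmt18 (n : ℕ) (t : ℤ) :
    ∑ k ∈ Finset.range (n + 1),
        (-1 : ℤ) ^ (n - k) * (Nat.choose (n + k) (n - k) : ℤ) * fibZ (2 * k + t) =
      if n % 5 = 0 then fibZ t
      else if n % 5 = 1 then fibZ (t + 1)
      else if n % 5 = 2 then 0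
      else if n % 5 = 3 then -fibZ (t + 1)
      else -fibZ t := by
  have hsum : ∑ k ∈ Finset.range (n + 1),
      (-1 : ℤ) ^ (n - k) * (Nat.choose (n + k) (n - k) : ℤ) * fibZ (2 * k + t) =
        signedChooseSum fibZ n t :=
    sum_congr rfl fun k hk => by
      rw [neg_one_pow_sub_mul_choose_eq_signedChoose (Nat.lt_succ_iff.1 (mem_range.1 hk))]
  rw [hsum]
  exact signedChooseSum_eq_fiveCycle fibZ_add_two n t
end
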